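/- Let A ∈ ℝ^{n×n}, B ∈ ℝ^{n×m}, C ∈ ℝ^{p×n}, and let u, x, y satisfy x(t+1) = A·x(t) + B·u(t) and y(t) = C·x(t) for all t. Fix L ≥ 1, suppose 𝒪_Lᵀ𝒪_L is invertible, set 𝒪_L† = (𝒪_Lᵀ𝒪_L)⁻¹𝒪_Lᵀ, and define S = [C·(𝒞_L − A^L·𝒪_L†·𝒯_L), C·A^L·𝒪_L†] ∈ ℝ^{p×(mL+pL)}. Then for every t ≥ L, y(t) = S·ξ_t, where ξ_t = (u_{t,L}, y_{t,L}) ∈ ℝ^{mL+pL} is the concatenation of the stacked past inputs and outputs. -/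

import Mathlib

/-!
Unrolling the dynamics `L` steps from `s = t - L` gives `x t = A^L x s + 𝒞_L u_{t,L}` and, block
row by block row, `y_{t,L} = 𝒪_L x s + 𝒯_L u_{t,L}`. Since `𝒪_L†` is a left inverse of `𝒪_L`,
the second identity recovers `x s = 𝒪_L† (y_{t,L} - 𝒯_L u_{t,L})`; substituting this into
`y t = C x t` gives `y t = S ξ_t`.
-/

open Matrix Finset

/-- Extended observability matrix `𝒪_L = [C A^{L−1}; …; C A; C]`
(block row `i` is `C * A ^ (L - 1 - i)`). -/
def obsMat (n p L : ℕ) (A : Matrix (Fin n) (Fin n) ℝ) (C : Matrix (Fin p) (Fin n) ℝ) :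
    Matrix (Fin L × Fin p) (Fin n) ℝ :=
  fun ia j => (C * A ^ (L - 1 - (ia.1 : ℕ))) ia.2 j

/-- Controllability matrix `𝒞_L = [B, A B, …, A^{L−1} B]`. -/
def ctrbMat (n m L : ℕ) (A : Matrix (Fin n) (Fin n) ℝ) (B : Matrix (Fin n) (Fin m) ℝ) :
    Matrix (Fin n) (Fin L × Fin m) ℝ :=
  fun i jb => (A ^ (jb.1 : ℕ) * B) i jb.2

/-- Impulse-response Toeplitz matrix `𝒯_L`: block `(i,j)` equals `C A^{j−i−1} B` if `j > i`
and `0` otherwise (`0`-indexed blocks). -/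
def toepMat (n m p L : ℕ) (A : Matrix (Fin n) (Fin n) ℝ) (B : Matrix (Fin n) (Fin m) ℝ)
    (C : Matrix (Fin p) (Fin n) ℝ) :
    Matrix (Fin L × Fin p) (Fin L × Fin m) ℝ :=
  fun ia jb =>
    if (ia.1 : ℕ) < (jb.1 : ℕ) then (C * A ^ ((jb.1 : ℕ) - (ia.1 : ℕ) - 1) * B) ia.2 jb.2 else 0

/-- Stacked past inputs `u_{t,L} = (u(t−1), …, u(t−L))`, most recent first. -/
def uStack (m L : ℕ) (u : ℕ → Fin m → ℝ) (t : ℕ) : Fin L × Fin m → ℝ :=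
  fun jb => u (t - 1 - (jb.1 : ℕ)) jb.2

/-- Stacked past outputs `y_{t,L} = (y(t−1), …, y(t−L))`, most recent first. -/
def yStack (p L : ℕ) (y : ℕ → Fin p → ℝ) (t : ℕ) : Fin L × Fin p → ℝ :=
  fun jc => y (t - 1 - (jc.1 : ℕ)) jc.2


/-- The matrix `S = [C(𝒞_L − A^L 𝒪_L† 𝒯_L), C A^L 𝒪_L†]`. -/
noncomputable def Smat (n m p L : ℕ) (A : Matrix (Fin n) (Fin n) ℝ) (B : Matrix (Fin n) (Fin m) ℝ)
    (C : Matrix (Fin p) (Fin n) ℝ) :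
    Matrix (Fin p) ((Fin L × Fin m) ⊕ (Fin L × Fin p)) ℝ :=
  Matrix.fromCols
    (C * (ctrbMat n m L A B -
      A ^ L * (((obsMat n p L A C)ᵀ * obsMat n p L A C)⁻¹ * (obsMat n p L A C)ᵀ) *
        toepMat n m p L A B C))
    (C * A ^ L * (((obsMat n p L A C)ᵀ * obsMat n p L A C)⁻¹ * (obsMat n p L A C)ᵀ))

/-- The non-minimal state `ξ_t = (u_{t,L}, y_{t,L})`. -/
def xiState (m p L : ℕ) (u : ℕ → Fin m → ℝ) (y : ℕ → Fin p → ℝ) (t : ℕ) :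
    (Fin L × Fin m) ⊕ (Fin L × Fin p) → ℝ :=
  Sum.elim (uStack m L u t) (yStack p L y t)

theorem state_add_eq_pow_mulVec_add_sum {R ι κ : Type*} [Semiring R] [Fintype ι] [DecidableEq ι]
    [Fintype κ] {A : Matrix ι ι R} {B : Matrix ι κ R} {u : ℕ → κ → R} {x : ℕ → ι → R}
    (hdyn : ∀ t, x (t + 1) = A *ᵥ x t + B *ᵥ u t) (s k : ℕ) :
    x (s + k) = A ^ k *ᵥ x s + ∑ j ∈ range k, (A ^ j * B) *ᵥ u (s + k - 1 - j) := by
  induction k with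
  | zero => simp
  | succ k ih =>
    have hshift : ∀ j ∈ range k, A *ᵥ ((A ^ j * B) *ᵥ u (s + k - 1 - j)) =
        (A ^ (j + 1) * B) *ᵥ u (s + k - (j + 1)) := fun j _ => by
      rw [mulVec_mulVec, ← Matrix.mul_assoc, ← pow_succ']
      congr 2
      omega
    rw [← add_assoc, Nat.add_sub_cancel, hdyn, ih, mulVec_add, mulVec_sum, sum_congr rfl hshift,
      sum_range_succ', mulVec_mulVec, ← pow_succ', pow_zero, Matrix.one_mul, Nat.sub_zero,
      add_assoc]

theorem pinv_mul_cancel_of_isUnit {R ι κ : Type*} [CommRing R] [Fintype ι] [Fintype κ]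
    [DecidableEq κ] {M : Matrix ι κ R} (h : IsUnit (Mᵀ * M)) : (Mᵀ * M)⁻¹ * Mᵀ * M = 1 := by
  rw [Matrix.mul_assoc, nonsing_inv_mul _ ((isUnit_iff_isUnit_det _).mp h)]

theorem mulVec_prod_apply {R ι κ α β : Type*} [NonUnitalNonAssocSemiring R] [Fintype κ]
    [Fintype β] (M : Matrix (ι × α) (κ × β) R) (v : κ × β → R) (i : ι) (a : α) :
    (M *ᵥ v) (i, a) = ∑ j, (of (fun a' b => M (i, a') (j, b)) *ᵥ fun b => v (j, b)) a := by
  simp only [mulVec, dotProduct, Fintype.sum_prod_type, of_apply]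

section SystemMatrices

variable {n m p L : ℕ} {A : Matrix (Fin n) (Fin n) ℝ} {B : Matrix (Fin n) (Fin m) ℝ}
  {C : Matrix (Fin p) (Fin n) ℝ}

theorem ctrbMat_mulVec_uStack (u : ℕ → Fin m → ℝ) (t : ℕ) :
    ctrbMat n m L A B *ᵥ uStack m L u t = ∑ j ∈ range L, (A ^ j * B) *ᵥ u (t - 1 - j) := by
  ext i
  rw [Finset.sum_apply, ← Fin.sum_univ_eq_sum_range (fun j => ((A ^ j * B) *ᵥ u (t - 1 - j)) i)]
  simp only [mulVec, dotProduct, Fintype.sum_prod_type, ctrbMat, uStack]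

theorem obsMat_mulVec_apply (v : Fin n → ℝ) (i : Fin L) (a : Fin p) :
    (obsMat n p L A C *ᵥ v) (i, a) = ((C * A ^ (L - 1 - (i : ℕ))) *ᵥ v) a := rfl

theorem toepMat_mulVec_uStack_apply (u : ℕ → Fin m → ℝ) (t : ℕ) (i : Fin L) (a : Fin p) :
    (toepMat n m p L A B C *ᵥ uStack m L u t) (i, a) =
      ∑ j ∈ range (L - 1 - i), ((C * A ^ j * B) *ᵥ u (t - 1 - (i + 1 + j))) a := by
  let f : ℕ → ℝ := fun k =>
    ((if (i : ℕ) < k then C * A ^ (k - i - 1) * B else 0) *ᵥ u (t - 1 - k)) a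
  have hblock : ∀ j : Fin L, (of fun a' b => toepMat n m p L A B C (i, a') (j, b)) =
      if (i : ℕ) < j then C * A ^ ((j : ℕ) - i - 1) * B else 0 := by
    intro j
    ext a' b
    split_ifs <;> simp [toepMat, *]
  have hsplit : range L = range ((i + 1) + (L - 1 - i)) := by congr 1; omega
  rw [mulVec_prod_apply]
  simp only [hblock, uStack]
  rw [Fin.sum_univ_eq_sum_range f, hsplit, sum_range_add, sum_eq_zero, zero_add]
  · refine sum_congr rfl fun j _ => ?_
    simp only [f, if_pos (by omega : (i : ℕ) < i + 1 + j)]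
    congr 4
    omega
  · intro k hk
    simp only [f, if_neg (by simpa using hk : ¬ (i : ℕ) < k), zero_mulVec, Pi.zero_apply]

theorem yStack_eq_obsMat_add_toepMat {u : ℕ → Fin m → ℝ} {x : ℕ → Fin n → ℝ}
    {y : ℕ → Fin p → ℝ} (hdyn : ∀ t, x (t + 1) = A *ᵥ x t + B *ᵥ u t)
    (hout : ∀ t, y t = C *ᵥ x t) (s : ℕ) :
    yStack p L y (s + L) =
      obsMat n p L A C *ᵥ x s + toepMat n m p L A B C *ᵥ uStack m L u (s + L) := by
  ext ⟨i, a⟩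
  have hi := i.isLt
  have htime : s + L - 1 - i = s + (L - 1 - i) := by omega
  rw [Pi.add_apply, obsMat_mulVec_apply, toepMat_mulVec_uStack_apply, yStack, htime, hout,
    state_add_eq_pow_mulVec_add_sum hdyn, mulVec_add, mulVec_sum, Pi.add_apply, Finset.sum_apply,
    ← mulVec_mulVec]
  congr 1
  refine sum_congr rfl fun j _ => ?_
  rw [mulVec_mulVec, Matrix.mul_assoc]
  congr 2
  omega

end SystemMatrices

theorem fromCols_mulVec_sumElim_eq_mulVec_add {R ι κ α β : Type*} [CommRing R] [Fintype ι]
    [DecidableEq ι] [Fintype κ] [Fintype α] [Fintype β] (C : Matrix κ ι R) (A : Matrix ι ι R)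
    (K : Matrix ι α R) (P : Matrix ι β R) (T : Matrix β α R) (w : α → R) (z : β → R) :
    fromCols (C * (K - A * P * T)) (C * A * P) *ᵥ Sum.elim w z =
      C *ᵥ (K *ᵥ w + A *ᵥ (P *ᵥ (z - T *ᵥ w))) := by
  simp only [fromCols_mulVec_sumElim, mulVec_sub, mulVec_add, sub_mulVec, mulVec_mulVec,
    Matrix.mul_sub, Matrix.mul_assoc]
  abel

theorem output_from_past_input_output_general
    (n m p L : ℕ)
    (A : Matrix (Fin n) (Fin n) ℝ) (B : Matrix (Fin n) (Fin m) ℝ)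
    (C : Matrix (Fin p) (Fin n) ℝ)
    (u : ℕ → Fin m → ℝ) (x : ℕ → Fin n → ℝ) (y : ℕ → Fin p → ℝ)
    (hdyn : ∀ t : ℕ, x (t + 1) = A.mulVec (x t) + B.mulVec (u t))
    (hout : ∀ t : ℕ, y t = C.mulVec (x t))
    (hObs : IsUnit ((obsMat n p L A C)ᵀ * obsMat n p L A C)) :
    ∀ t : ℕ, L ≤ t →
      y t = (Smat n m p L A B C).mulVec (xiState m p L u y t) := by
  intro t ht
  obtain ⟨s, rfl⟩ : ∃ s, t = s + L := ⟨t - L, by omega⟩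
  have hx : x s = (((obsMat n p L A C)ᵀ * obsMat n p L A C)⁻¹ * (obsMat n p L A C)ᵀ) *ᵥ
      (yStack p L y (s + L) - toepMat n m p L A B C *ᵥ uStack m L u (s + L)) := by
    rw [yStack_eq_obsMat_add_toepMat hdyn hout, add_sub_cancel_right, mulVec_mulVec,
      pinv_mul_cancel_of_isUnit hObs, one_mulVec]
  rw [Smat, xiState, fromCols_mulVec_sumElim_eq_mulVec_add, ← hx, ctrbMat_mulVec_uStack, hout,
    state_add_eq_pow_mulVec_add_sum hdyn, add_comm]

theorem output_from_past_input_output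
    (n m p L : ℕ) (hL : 1 ≤ L)
    (A : Matrix (Fin n) (Fin n) ℝ) (B : Matrix (Fin n) (Fin m) ℝ)
    (C : Matrix (Fin p) (Fin n) ℝ)
    (u : ℕ → Fin m → ℝ) (x : ℕ → Fin n → ℝ) (y : ℕ → Fin p → ℝ)
    (hdyn : ∀ t : ℕ, x (t + 1) = A.mulVec (x t) + B.mulVec (u t))
    (hout : ∀ t : ℕ, y t = C.mulVec (x t))
    (hObs : IsUnit ((obsMat n p L A C)ᵀ * obsMat n p L A C)) :
    ∀ t : ℕ, L ≤ t →
      y t = (Smat n m p L A B C).mulVec (xiState m p L u y t) :=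
  output_from_past_input_output_general n m p L A B C u x y hdyn hout hObs
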